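/- arXiv:2501.14422 — 4 statements merged into one kernel-verified Lean document; each statement's English description precedes it below -/
import Mathlib

section
/- Andreief's identity: Let μ be a measure on ℝ and f_1,…,f_n, g_1,…,g_n ∈ L²(μ). Then ∫⋯∫ det(f_j(x_k))_{j,k=1}^n det(g_j(x_k))_{j,k=1}^n dμ(x_1)⋯dμ(x_n) = n! · det( ∫ f_j(x) g_k(x) dμ(x) )_{j,k=1}^n. -/
/-!
Expanding both determinants by the Leibniz formula turns the integrand into a signed double sum
over permutations `σ, τ` of products `∏ i, f (σ i) (x i) * g (τ i) (x i)`, each of which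
integrates by Fubini to `∏ i, A (σ i) (τ i)` with `A j k = ∫ f j * g k`. For fixed `σ` the sum
over `τ` is the determinant of `A` with rows permuted by `σ`, i.e. `sign σ * det A`, so each of
the `n!` permutations `σ` contributes exactly `det A`.
-/

open MeasureTheory Equiv

namespace Matrix

variable {ι R : Type*} [Fintype ι] [DecidableEq ι] [CommRing R]

theorem det_mul_det_eq_sum_sum (M N : Matrix ι ι R) :
    M.det * N.det = ∑ σ : Perm ι, ∑ τ : Perm ι,
      ((Perm.sign σ : ℤ) * (Perm.sign τ : ℤ) : R) * ∏ i, M (σ i) i * N (τ i) i := by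
  rw [det_apply', det_apply', Finset.sum_mul_sum]
  refine Finset.sum_congr rfl fun σ _ => Finset.sum_congr rfl fun τ _ => ?_
  rw [Finset.prod_mul_distrib]
  ring

theorem sum_sign_mul_prod_apply_perm (A : Matrix ι ι R) (σ : Perm ι) :
    ∑ τ : Perm ι, ((Perm.sign τ : ℤ) : R) * ∏ i, A (σ i) (τ i) = Perm.sign σ * A.det := by
  rw [← det_permute, ← det_transpose, det_apply']
  rfl

theorem sum_sum_sign_mul_prod_eq_factorial_mul_det (A : Matrix ι ι R) :
    ∑ σ : Perm ι, ∑ τ : Perm ι,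
        ((Perm.sign σ : ℤ) * (Perm.sign τ : ℤ) : R) * ∏ i, A (σ i) (τ i)
      = (Fintype.card ι).factorial * A.det := by
  have sign_mul_self (σ : Perm ι) : ((Perm.sign σ : ℤ) : R) * (Perm.sign σ : ℤ) = 1 := by
    rw [← Int.cast_mul, Int.units_coe_mul_self, Int.cast_one]
  simp_rw [mul_assoc, ← Finset.mul_sum, sum_sign_mul_prod_apply_perm, ← mul_assoc,
    sign_mul_self, one_mul, Finset.sum_const, Finset.card_univ, Fintype.card_perm, nsmul_eq_mul]

end Matrix

namespace MeasureTheory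

variable {ι α 𝕜 : Type*} [Fintype ι] [DecidableEq ι] [RCLike 𝕜] [MeasurableSpace α]

theorem integral_det_mul_det (μ : Measure α) [SigmaFinite μ] (f g : ι → α → 𝕜)
    (hfg : ∀ j k, Integrable (fun x => f j x * g k x) μ) :
    ∫ x : ι → α, (Matrix.of fun j k => f j (x k)).det * (Matrix.of fun j k => g j (x k)).det
        ∂(Measure.pi fun _ => μ)
      = (Fintype.card ι).factorial * (Matrix.of fun j k => ∫ x, f j x * g k x ∂μ).det := by
  have integrable_prod (σ τ : Perm ι) :
      Integrable (fun x : ι → α => ∏ i, f (σ i) (x i) * g (τ i) (x i))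
        (Measure.pi fun _ => μ) :=
    Integrable.fintype_prod fun i => hfg (σ i) (τ i)
  simp_rw [Matrix.det_mul_det_eq_sum_sum, Matrix.of_apply]
  rw [← Matrix.sum_sum_sign_mul_prod_eq_factorial_mul_det, integral_finsetSum _ fun σ _ =>
    integrable_finsetSum _ fun τ _ => (integrable_prod σ τ).const_mul _]
  refine Finset.sum_congr rfl fun σ _ => ?_
  rw [integral_finsetSum _ fun τ _ => (integrable_prod σ τ).const_mul _]
  refine Finset.sum_congr rfl fun τ _ => ?_
  rw [integral_const_mul, integral_fintype_prod_eq_prod fun i x => f (σ i) x * g (τ i) x]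
  rfl

end MeasureTheory

/-- **Andreief's identity.** Let `μ` be a measure on `ℝ` and
`f_1,…,f_n, g_1,…,g_n ∈ L²(μ)`.  Then
`∫⋯∫ det(f_j(x_k)) det(g_j(x_k)) dμ(x_1)⋯dμ(x_n) = n! · det(∫ f_j g_k dμ)`. -/
theorem stmt6 (μ : Measure ℝ) [SigmaFinite μ] (n : ℕ)
    (f g : Fin n → ℝ → ℝ)
    (hf : ∀ j, MemLp (f j) 2 μ) (hg : ∀ j, MemLp (g j) 2 μ) :
    (∫ x : Fin n → ℝ,
        (Matrix.of fun j k : Fin n => f j (x k)).det *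
          (Matrix.of fun j k : Fin n => g j (x k)).det
        ∂(Measure.pi fun _ => μ))
      = (n.factorial : ℝ) *
          (Matrix.of fun j k : Fin n => ∫ x : ℝ, f j x * g k x ∂μ).det := by
  have hfg (j k : Fin n) : Integrable (fun x => f j x * g k x) μ := (hf j).integrable_mul (hg k)
  rw [integral_det_mul_det μ f g hfg, Fintype.card_fin]
end

section
/- There exist constants C, d > 0 (depending only on η and α) such that for all sufficiently large n and all j,k ≥ 1, the resolvent of the free Jacobi operator satisfies |((J̃ − (−2 + η/n^α) Id)^{−1})_{j,k}| ≤ C n^{α/2} e^{−d n^{−α/2}|j−k|}. Consequently, for any m_1 > m_2 ≥ 0, the Hilbert–Schmidt norm bound ‖P_{m_1} Q_{m_2} (J̃ − (−2 + η/n^α))^{−1}‖_2 ≤ √(C_0 n^{3α/2}(m_1 − m_2)) holds for some constant C_0 > 0. -/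
noncomputable section

abbrev l2 : Type := lp (fun _ : ℕ => ℂ) 2

/-!
For `z = ω + ω⁻¹` with `‖ω‖ < 1`, the columns of `(J̃ - z)⁻¹` are explicit (method of images):
`G_{jk} = (ω^{|j-k|} - ω^{j+k+2}) / (ω - ω⁻¹)`, so `|G_{jk}| ≤ 2 ‖ω‖^{|j-k|} / ‖ω - ω⁻¹‖`.
Near the band edge, `z = -2 + ε`, the identities `(ω - ω⁻¹)² = ε (ε - 4)` and `(ω + 1)² = ε ω`
give `‖ω - ω⁻¹‖ ≥ √(3‖ε‖)` and `1 - ‖ω‖ ≥ |Im ε| / (8 √‖ε‖)`; for `ε = η / n^α` these are the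
factors `n^{α/2}` and `e^{-d n^{-α/2}}`. A row of squared entries is then a two-sided geometric
series of size `O(n^α / (1 - e^{-2d n^{-α/2}})) = O(n^{3α/2})`, and the Hilbert–Schmidt norm
over `m₁ - m₂` rows follows.
-/

open Finset Filter

section GeometricTail

variable {q : ℝ}

lemma summable_pow_natAbs_sub (hq0 : 0 ≤ q) (hq1 : q < 1) (j : ℕ) :
    Summable fun k : ℕ => q ^ ((j : ℤ) - k).natAbs := by
  rw [← summable_nat_add_iff j]
  have hshift : ∀ i : ℕ, ((j : ℤ) - (i + j : ℕ)).natAbs = i := fun i => by omega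
  simpa only [hshift] using summable_geometric_of_lt_one hq0 hq1

lemma tsum_pow_natAbs_sub_le (hq0 : 0 ≤ q) (hq1 : q < 1) (j : ℕ) :
    ∑' k : ℕ, q ^ ((j : ℤ) - k).natAbs ≤ 2 / (1 - q) := by
  rw [← (summable_pow_natAbs_sub hq0 hq1 j).sum_add_tsum_nat_add j]
  have hhead : ∑ k ∈ range j, q ^ ((j : ℤ) - k).natAbs ≤ 1 / (1 - q) := by
    rw [← sum_range_reflect]
    calc ∑ m ∈ range j, q ^ ((j : ℤ) - (j - 1 - m : ℕ)).natAbs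
        ≤ ∑ m ∈ range j, q ^ m :=
          sum_le_sum fun m hm =>
            pow_le_pow_of_le_one hq0 hq1.le (by have := mem_range.1 hm; omega)
      _ ≤ 1 / (1 - q) := by
          have h := geom_sum_Ico_le_of_lt_one (m := 0) (n := j) hq0 hq1
          rwa [pow_zero, ← range_eq_Ico] at h
  have htail : ∑' i : ℕ, q ^ ((j : ℤ) - (i + j : ℕ)).natAbs = 1 / (1 - q) := by
    have hshift : ∀ i : ℕ, ((j : ℤ) - (i + j : ℕ)).natAbs = i := fun i => by omega
    simp only [hshift, tsum_geometric_of_lt_one hq0 hq1, one_div]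
  have htwo : 2 / (1 - q) = 1 / (1 - q) + 1 / (1 - q) := by ring
  linarith

lemma div_one_add_le_one_sub_exp_neg {x : ℝ} (hx : 0 ≤ x) : x / (1 + x) ≤ 1 - Real.exp (-x) := by
  have h : (Real.exp x)⁻¹ * (1 + x) ≤ 1 := by
    rw [inv_mul_le_iff₀ (Real.exp_pos x)]
    linarith [Real.add_one_le_exp x]
  rw [Real.exp_neg, div_le_iff₀ (by positivity)]
  linarith

lemma tsum_sq_le_of_norm_le_exp {E : Type*} [SeminormedAddCommGroup E] {a : ℕ → E} {B x : ℝ}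
    (hx : 0 < x) (j : ℕ) (ha : ∀ k, ‖a k‖ ≤ B * Real.exp (-x * |(j : ℝ) - k|)) :
    ∑' k, ‖a k‖ ^ 2 ≤ B ^ 2 * (1 + 2 * x) / x := by
  set q := Real.exp (-(2 * x))
  have hq0 : 0 ≤ q := (Real.exp_pos _).le
  have hq1 : q < 1 := Real.exp_lt_one_iff.2 (by linarith)
  have hsq : ∀ k : ℕ, ‖a k‖ ^ 2 ≤ B ^ 2 * q ^ ((j : ℤ) - k).natAbs := fun k => by
    have habs : |(j : ℝ) - k| = (((j : ℤ) - k).natAbs : ℝ) := by push_cast [Nat.cast_natAbs]; rfl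
    calc ‖a k‖ ^ 2 ≤ (B * Real.exp (-x * |(j : ℝ) - k|)) ^ 2 :=
          pow_le_pow_left₀ (norm_nonneg _) (ha k) 2
      _ = B ^ 2 * q ^ ((j : ℤ) - k).natAbs := by
          rw [mul_pow, ← Real.exp_nat_mul, ← Real.exp_nat_mul, habs]; ring_nf
  have hsum := summable_pow_natAbs_sub hq0 hq1 j
  calc ∑' k, ‖a k‖ ^ 2 ≤ ∑' k : ℕ, B ^ 2 * q ^ ((j : ℤ) - k).natAbs :=
        ((hsum.mul_left _).of_nonneg_of_le (fun _ => by positivity) hsq).tsum_le_tsum hsq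
          (hsum.mul_left _)
    _ ≤ B ^ 2 * (2 / (1 - q)) := by
        rw [tsum_mul_left]
        exact mul_le_mul_of_nonneg_left (tsum_pow_natAbs_sub_le hq0 hq1 j) (sq_nonneg _)
    _ ≤ B ^ 2 * (1 + 2 * x) / x := by
        have hq : 2 * x / (1 + 2 * x) ≤ 1 - q := div_one_add_le_one_sub_exp_neg (by positivity)
        rw [mul_div_assoc]
        refine mul_le_mul_of_nonneg_left ?_ (sq_nonneg _)
        rw [div_le_div_iff₀ (by linarith) hx]
        rw [div_le_iff₀ (by positivity)] at hq
        nlinarith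

end GeometricTail

section FreeGreen

variable {ω : ℂ}

lemma exists_inv_add_eq_of_im_ne_zero {z : ℂ} (hz : z.im ≠ 0) :
    ∃ ω : ℂ, ω ≠ 0 ∧ ‖ω‖ < 1 ∧ ω + ω⁻¹ = z := by
  obtain ⟨s, hs⟩ := IsAlgClosed.exists_pow_nat_eq (z ^ 2 - 4) (n := 2) (by norm_num)
  have hprod : (z + s) / 2 * ((z - s) / 2) = 1 := by linear_combination (-(1 : ℂ) / 4) * hs
  -- the roots `ω` of `ω² - zω + 1` come in pairs `ω, ω⁻¹`, and none lies on the unit circle,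
  -- where `ω⁻¹ = conj ω` would make `z = ω + ω⁻¹` real
  have hroot : ∀ {ω ω' : ℂ}, ω * ω' = 1 → ω + ω' = z → ‖ω‖ ≤ 1 →
      ∃ ω : ℂ, ω ≠ 0 ∧ ‖ω‖ < 1 ∧ ω + ω⁻¹ = z := by
    intro ω ω' hmul hsum hle
    have hω0 : ω ≠ 0 := left_ne_zero_of_mul_eq_one hmul
    have hω' : ω' = ω⁻¹ := eq_inv_of_mul_eq_one_right hmul
    refine ⟨ω, hω0, lt_of_le_of_ne hle fun h1 => hz ?_, hω' ▸ hsum⟩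
    have hns : Complex.normSq ω = 1 := by rw [← Complex.sq_norm, h1, one_pow]
    rw [← hsum, hω', Complex.add_im, Complex.inv_im, hns]
    ring
  rcases le_total ‖(z + s) / 2‖ 1 with h | h
  · exact hroot hprod (by ring) h
  · refine hroot (mul_comm ((z + s) / 2) _ ▸ hprod) (by ring) ?_
    have := congrArg norm hprod
    rw [norm_mul, norm_one] at this
    nlinarith [norm_nonneg ((z - s) / 2)]

lemma pow_natAbs_sub_one_add_pow_natAbs_add_one (hω : ω ≠ 0) (m : ℤ) :
    ω ^ (m - 1).natAbs + ω ^ (m + 1).natAbs - (ω + ω⁻¹) * ω ^ m.natAbs =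
      if m = 0 then ω - ω⁻¹ else 0 := by
  have hu : ω * ω⁻¹ = 1 := mul_inv_cancel₀ hω
  rcases lt_trichotomy m 0 with hm | rfl | hm
  · obtain ⟨n, hn⟩ : ∃ n : ℕ, m.natAbs = n + 1 := ⟨m.natAbs - 1, by omega⟩
    rw [if_neg hm.ne, show (m - 1).natAbs = n + 2 by omega, show (m + 1).natAbs = n by omega, hn]
    linear_combination (-ω ^ n) * hu
  · simp
  · obtain ⟨n, hn⟩ : ∃ n : ℕ, m.natAbs = n + 1 := ⟨m.natAbs - 1, by omega⟩
    rw [if_neg hm.ne', show (m - 1).natAbs = n by omega, show (m + 1).natAbs = n + 2 by omega, hn]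
    linear_combination (-ω ^ n) * hu

-- Indexed by `ℤ` so that the boundary row `i = 0` of `J̃` is the recurrence with the ghost value
-- `freeGreen ω k (-1) = 0`, which the image term `ω^{|i+k+2|}` enforces.
def freeGreen (ω : ℂ) (k : ℕ) (i : ℤ) : ℂ :=
  (ω ^ (i - k).natAbs - ω ^ (i + k + 2).natAbs) / (ω - ω⁻¹)

lemma freeGreen_neg_one (k : ℕ) : freeGreen ω k (-1) = 0 := by
  simp only [freeGreen, show (-1 - k : ℤ).natAbs = (-1 + k + 2 : ℤ).natAbs by omega, sub_self,
    zero_div]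

lemma freeGreen_recurrence (hω : ω ≠ 0) (hw : ω - ω⁻¹ ≠ 0) (k : ℕ) {i : ℤ} (hi : 0 ≤ i) :
    freeGreen ω k (i - 1) + freeGreen ω k (i + 1) - (ω + ω⁻¹) * freeGreen ω k i =
      if i = k then 1 else 0 := by
  have hdiag := pow_natAbs_sub_one_add_pow_natAbs_add_one hω (i - k)
  have himage := pow_natAbs_sub_one_add_pow_natAbs_add_one hω (i + k + 2)
  rw [if_neg (by omega)] at himage
  simp only [sub_eq_zero] at hdiag
  simp only [freeGreen, show i - 1 - k = i - k - 1 by ring, show i + 1 - k = i - k + 1 by ring,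
    show i - 1 + k + 2 = i + k + 2 - 1 by ring, show i + 1 + k + 2 = i + k + 2 + 1 by ring,
    mul_div_assoc', ← add_div, ← sub_div]
  split_ifs at hdiag ⊢
  · rw [div_eq_one_iff_eq hw]
    linear_combination hdiag - himage
  · rw [div_eq_zero_iff]
    left
    linear_combination hdiag - himage

lemma norm_freeGreen_le (hω1 : ‖ω‖ ≤ 1) (k i : ℕ) :
    ‖freeGreen ω k i‖ ≤ 2 * ‖ω‖ ^ ((i : ℤ) - k).natAbs / ‖ω - ω⁻¹‖ := by
  rw [freeGreen, norm_div]
  gcongr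
  refine (norm_sub_le _ _).trans ?_
  rw [norm_pow, norm_pow, two_mul]
  exact add_le_add_right (pow_le_pow_of_le_one (norm_nonneg _) hω1 (by omega)) _

end FreeGreen

section Resolvent

variable {ω : ℂ}

lemma memℓp_freeGreen (hω1 : ‖ω‖ < 1) (k : ℕ) :
    Memℓp (fun i : ℕ => freeGreen ω k i) 2 := by
  refine memℓp_gen ?_
  simp only [ENNReal.toReal_ofNat, Real.rpow_two]
  have hq0 : 0 ≤ ‖ω‖ ^ 2 := sq_nonneg _
  have hq1 : ‖ω‖ ^ 2 < 1 := by nlinarith [norm_nonneg ω]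
  refine ((summable_pow_natAbs_sub hq0 hq1 k).mul_left ((2 / ‖ω - ω⁻¹‖) ^ 2)).of_nonneg_of_le
    (fun _ => sq_nonneg _) fun i => ?_
  calc ‖freeGreen ω k i‖ ^ 2 ≤ (2 * ‖ω‖ ^ ((i : ℤ) - k).natAbs / ‖ω - ω⁻¹‖) ^ 2 :=
        pow_le_pow_left₀ (norm_nonneg _) (norm_freeGreen_le hω1.le k i) 2
    _ = (2 / ‖ω - ω⁻¹‖) ^ 2 * (‖ω‖ ^ 2) ^ ((k : ℤ) - i).natAbs := by
        rw [show ((k : ℤ) - i).natAbs = ((i : ℤ) - k).natAbs by omega]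
        ring

lemma resolvent_single_apply (J G : l2 →L[ℂ] l2)
    (hJ : ∀ (x : l2) (j : ℕ), (J x) j = (if j = 0 then 0 else x (j - 1)) + x (j + 1))
    (hω : ω ≠ 0) (hω1 : ‖ω‖ < 1) (hG : G * (J - (ω + ω⁻¹) • 1) = 1) (k j : ℕ) :
    G (lp.single 2 k 1) j = freeGreen ω k j := by
  have hw : ω - ω⁻¹ ≠ 0 := by
    intro h
    have hsq := mul_inv_cancel₀ hω
    rw [← sub_eq_zero.1 h] at hsq
    have := congrArg norm hsq
    rw [norm_mul, norm_one] at this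
    nlinarith [norm_nonneg ω]
  set g : l2 := ⟨_, memℓp_freeGreen hω1 k⟩
  have hsolve : (J - (ω + ω⁻¹) • 1) g = lp.single 2 k 1 := by
    ext i
    have hprev : (if i = 0 then 0 else g (i - 1)) = freeGreen ω k ((i : ℤ) - 1) := by
      rcases i with _ | i
      · simp [freeGreen_neg_one]
      · simp [g]
    rw [sub_apply, lp.coeFn_sub, Pi.sub_apply, hJ, hprev,
      smul_apply, one_apply_eq_self, lp.coeFn_smul, Pi.smul_apply,
      smul_eq_mul, lp.single_apply, Pi.single_apply]
    simpa [g] using freeGreen_recurrence hω hw k (Int.natCast_nonneg i)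
  calc G (lp.single 2 k 1) j = (G * (J - (ω + ω⁻¹) • 1)) g j := by rw [← hsolve]; rfl
    _ = freeGreen ω k j := by rw [hG]; rfl

end Resolvent

section NearBandEdge

variable {ω ε : ℂ}

lemma sqrt_three_mul_norm_le_norm_sub_inv (hω : ω ≠ 0) (hz : ω + ω⁻¹ = -2 + ε)
    (hε : ‖ε‖ ≤ 1) : √(3 * ‖ε‖) ≤ ‖ω - ω⁻¹‖ := by
  have hsq : (ω - ω⁻¹) ^ 2 = ε * (ε - 4) := by
    linear_combination (ω + ω⁻¹ - 2 + ε) * hz - 4 * mul_inv_cancel₀ hω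
  have hε4 : 3 ≤ ‖ε - 4‖ := by
    have h := norm_sub_norm_le (4 : ℂ) ε
    rw [norm_sub_rev, Complex.norm_ofNat] at h
    linarith
  rw [Real.sqrt_le_left (norm_nonneg (ω - ω⁻¹)), ← norm_pow, hsq, norm_mul, mul_comm]
  exact mul_le_mul_of_nonneg_left hε4 (norm_nonneg ε)

lemma norm_le_exp_of_inv_add_eq (hω : ω ≠ 0) (hω1 : ‖ω‖ < 1) (hz : ω + ω⁻¹ = -2 + ε)
    (hε : ‖ε‖ ≤ 1 / 4) : ‖ω‖ ≤ Real.exp (-(|ε.im| / (8 * √‖ε‖))) := by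
  set r := ‖ω‖
  have hr0 : 0 < r := norm_pos_iff.2 hω
  have hsq : (ω + 1) ^ 2 = ε * ω := by linear_combination ω * hz - mul_inv_cancel₀ hω
  have hshift : ‖ω + 1‖ ≤ √‖ε‖ := by
    rw [Real.le_sqrt (norm_nonneg _) (norm_nonneg _), ← norm_pow, hsq, norm_mul]
    exact mul_le_of_le_one_right (norm_nonneg _) hω1.le
  have hsqrtε : √‖ε‖ ≤ 1 / 2 := by
    rw [Real.sqrt_le_left (by norm_num)]; linarith
  have hr_half : 1 / 2 ≤ r := by
    have h := norm_sub_norm_le (1 : ℂ) (-ω)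
    rw [sub_neg_eq_add, add_comm, norm_neg, norm_one] at h
    linarith
  have him : ε.im * r ^ 2 = ω.im * (r ^ 2 - 1) := by
    have h := congrArg Complex.im hz
    rw [Complex.add_im, Complex.add_im, Complex.inv_im, ← Complex.sq_norm] at h
    field_simp at h
    simp only [Complex.neg_im, Complex.im_ofNat] at h
    linear_combination -h
  have hωim : |ω.im| ≤ √‖ε‖ := by
    calc |ω.im| = |(ω + 1).im| := by simp
      _ ≤ ‖ω + 1‖ := Complex.abs_im_le_norm _
      _ ≤ √‖ε‖ := hshift
  have hgap : |ε.im| ≤ 8 * √‖ε‖ * (1 - r) := by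
    have habs : |ε.im| * r ^ 2 = |ω.im| * ((1 - r) * (1 + r)) := by
      rw [← abs_of_pos (by positivity : 0 < r ^ 2), ← abs_mul, him, abs_mul,
        abs_of_neg (by nlinarith : r ^ 2 - 1 < 0)]
      ring
    have h1 : 0 ≤ (1 - r) * (1 + r) := by nlinarith
    have h2 : |ω.im| * ((1 - r) * (1 + r)) ≤ √‖ε‖ * ((1 - r) * 2) :=
      mul_le_mul hωim (mul_le_mul_of_nonneg_left (by linarith) (by linarith)) h1 (by positivity)
    have h3 := mul_le_mul_of_nonneg_left (by nlinarith : 1 / 4 ≤ r ^ 2) (abs_nonneg ε.im)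
    linarith
  have hdecay : |ε.im| / (8 * √‖ε‖) ≤ 1 - r :=
    div_le_of_le_mul₀ (by positivity) (by linarith) (by linarith)
  linarith [Real.add_one_le_exp (-(|ε.im| / (8 * √‖ε‖)))]

lemma norm_resolvent_single_apply_le (hεim : ε.im ≠ 0) (hε : ‖ε‖ ≤ 1 / 4) (J G : l2 →L[ℂ] l2)
    (hJ : ∀ (x : l2) (j : ℕ), (J x) j = (if j = 0 then 0 else x (j - 1)) + x (j + 1))
    (hG : G * (J - ((-2 : ℂ) + ε) • 1) = 1) (j k : ℕ) :
    ‖G (lp.single 2 k 1) j‖ ≤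
      2 / √(3 * ‖ε‖) * Real.exp (-(|ε.im| / (8 * √‖ε‖)) * |(j : ℝ) - k|) := by
  obtain ⟨ω, hω, hω1, hz⟩ := exists_inv_add_eq_of_im_ne_zero (z := -2 + ε) (by simpa using hεim)
  have hε0 : 0 < ‖ε‖ := norm_pos_iff.2 fun h => hεim (by simp [h])
  have hdist : |(j : ℝ) - k| = (((j : ℤ) - k).natAbs : ℝ) := by push_cast [Nat.cast_natAbs]; rfl
  rw [← hz] at hG
  have hexp : ∀ x : ℝ, Real.exp (x * ((j : ℤ) - k).natAbs) = Real.exp x ^ ((j : ℤ) - k).natAbs :=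
    fun x => by rw [mul_comm, Real.exp_nat_mul]
  rw [resolvent_single_apply J G hJ hω hω1 hG, hdist, hexp]
  calc ‖freeGreen ω k j‖ ≤ 2 * ‖ω‖ ^ ((j : ℤ) - k).natAbs / ‖ω - ω⁻¹‖ :=
        norm_freeGreen_le hω1.le k j
    _ ≤ 2 * Real.exp (-(|ε.im| / (8 * √‖ε‖))) ^ ((j : ℤ) - k).natAbs / √(3 * ‖ε‖) := by
        gcongr
        · exact norm_le_exp_of_inv_add_eq hω hω1 hz hε
        · exact sqrt_three_mul_norm_le_norm_sub_inv hω hz (by linarith)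
    _ = _ := by ring

end NearBandEdge

lemma norm_resolvent_single_apply_le_of_scale {η : ℂ} (hη : η.im ≠ 0) {t : ℝ}
    (ht : 4 * ‖η‖ ≤ t) (J G : l2 →L[ℂ] l2)
    (hJ : ∀ (x : l2) (j : ℕ), (J x) j = (if j = 0 then 0 else x (j - 1)) + x (j + 1))
    (hG : G * (J - ((-2 : ℂ) + η / (t : ℂ)) • 1) = 1) (j k : ℕ) :
    ‖G (lp.single 2 k 1) j‖ ≤ 2 / √(3 * ‖η‖) * √t *
      Real.exp (-(|η.im| / (8 * √‖η‖) * (√t)⁻¹) * |(j : ℝ) - k|) := by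
  have hη0 : 0 < ‖η‖ := norm_pos_iff.2 fun h => hη (by simp [h])
  have ht0 : 0 < t := by linarith
  have hεim : (η / (t : ℂ)).im = η.im / t := Complex.div_ofReal_im η t
  have hε : ‖η / (t : ℂ)‖ = ‖η‖ / t := by
    rw [norm_div, Complex.norm_real, Real.norm_of_nonneg ht0.le]
  have h := norm_resolvent_single_apply_le (by rw [hεim]; exact div_ne_zero hη ht0.ne')
    (by rw [hε, div_le_iff₀ ht0]; linarith) J G hJ hG j k
  have hscale : 2 / √(3 * ‖η / (t : ℂ)‖) = 2 / √(3 * ‖η‖) * √t := by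
    rw [hε, mul_div_assoc', Real.sqrt_div' _ ht0.le]
    field_simp
  have hrate : |(η / (t : ℂ)).im| / (8 * √‖η / (t : ℂ)‖) = |η.im| / (8 * √‖η‖) * (√t)⁻¹ := by
    rw [hεim, hε, abs_div, abs_of_pos ht0, Real.sqrt_div' _ ht0.le,
      ← Real.sq_sqrt ht0.le]
    field_simp
    rw [Real.sqrt_sq (Real.sqrt_nonneg t)]
  rwa [hscale, hrate] at h

lemma sq_mul_one_add_div_le {C d s : ℝ} (hd : 0 < d) (hs : 1 ≤ s) :
    (C * s) ^ 2 * (1 + 2 * (d * s⁻¹)) / (d * s⁻¹) ≤ C ^ 2 * (1 + 2 * d) / d * s ^ 3 := by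
  have hs' : s + 2 * d ≤ (1 + 2 * d) * s := by nlinarith
  calc (C * s) ^ 2 * (1 + 2 * (d * s⁻¹)) / (d * s⁻¹) = C ^ 2 * (s + 2 * d) / d * s ^ 2 := by
        field_simp
    _ ≤ C ^ 2 * ((1 + 2 * d) * s) / d * s ^ 2 := by gcongr
    _ = C ^ 2 * (1 + 2 * d) / d * s ^ 3 := by ring

theorem stmt11_general (η : ℂ) (hη : η.im ≠ 0) (α : ℝ) (hα : 0 < α) :
    ∃ C > (0 : ℝ), ∃ d > (0 : ℝ), ∃ C₀ > (0 : ℝ), ∃ N₀ : ℕ, ∀ n : ℕ, N₀ ≤ n →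
      ∀ J G : l2 →L[ℂ] l2,
        (∀ (x : l2) (j : ℕ), (J x) j = (if j = 0 then 0 else x (j - 1)) + x (j + 1)) →
        G * (J - ((-2 : ℂ) + η / ((((n : ℝ) ^ α : ℝ)) : ℂ)) • 1) = 1 →
        (J - ((-2 : ℂ) + η / ((((n : ℝ) ^ α : ℝ)) : ℂ)) • 1) * G = 1 →
        (∀ j k : ℕ,
          ‖(G (lp.single 2 k 1)) j‖
            ≤ C * (n : ℝ) ^ (α / 2) *
                Real.exp (-d * (n : ℝ) ^ (-(α / 2)) * |(j : ℝ) - (k : ℝ)|)) ∧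
        (∀ m₁ m₂ : ℕ, m₂ < m₁ →
          Real.sqrt (∑ j ∈ Finset.Ico m₂ m₁, ∑' k : ℕ, ‖(G (lp.single 2 k 1)) j‖ ^ 2)
            ≤ Real.sqrt (C₀ * (n : ℝ) ^ (3 * α / 2) * ((m₁ : ℝ) - (m₂ : ℝ)))) := by
  set C := 2 / √(3 * ‖η‖)
  set d := |η.im| / (8 * √‖η‖)
  have hη0 : 0 < ‖η‖ := norm_pos_iff.2 fun h => hη (by simp [h])
  have hd : 0 < d := div_pos (abs_pos.2 hη) (by positivity)
  obtain ⟨N, hN⟩ := eventually_atTop.1 (((tendsto_rpow_atTop hα).comp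
    tendsto_natCast_atTop_atTop).eventually_ge_atTop (4 * ‖η‖))
  refine ⟨C, by positivity, d, hd, C ^ 2 * (1 + 2 * d) / d, by positivity, max N 1,
    fun n hn J G hJ hG _ => ?_⟩
  have hnα : 4 * ‖η‖ ≤ (n : ℝ) ^ α := hN n ((le_max_left _ _).trans hn)
  have hn0 : (0 : ℝ) < n := by exact_mod_cast (le_max_right N 1).trans hn
  set s := (n : ℝ) ^ (α / 2)
  have hsqrt : √((n : ℝ) ^ α) = s := by
    rw [Real.sqrt_eq_rpow, ← Real.rpow_mul hn0.le, mul_one_div]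
  have hentry : ∀ j k : ℕ, ‖G (lp.single 2 k 1) j‖ ≤
      C * s * Real.exp (-d * (n : ℝ) ^ (-(α / 2)) * |(j : ℝ) - k|) := fun j k => by
    have h := norm_resolvent_single_apply_le_of_scale hη hnα J G hJ hG j k
    rwa [hsqrt, ← Real.rpow_neg hn0.le, ← neg_mul] at h
  refine ⟨hentry, fun m₁ m₂ hm => Real.sqrt_le_sqrt ?_⟩
  have hrow (j : ℕ) : ∑' k : ℕ, ‖G (lp.single 2 k 1) j‖ ^ 2 ≤
      C ^ 2 * (1 + 2 * d) / d * s ^ 3 :=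
    (tsum_sq_le_of_norm_le_exp (x := d * s⁻¹) (by positivity) j fun k => (hentry j k).trans_eq
      (by rw [Real.rpow_neg hn0.le, neg_mul d])).trans
      (sq_mul_one_add_div_le hd (Real.one_le_rpow (by exact_mod_cast hn0) (by positivity)))
  have hs3 : s ^ 3 = (n : ℝ) ^ (3 * α / 2) := by
    rw [← Real.rpow_mul_natCast hn0.le]; ring_nf
  calc ∑ j ∈ Finset.Ico m₂ m₁, ∑' k : ℕ, ‖G (lp.single 2 k 1) j‖ ^ 2
      ≤ (Finset.Ico m₂ m₁).card • (C ^ 2 * (1 + 2 * d) / d * s ^ 3) :=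
        sum_le_card_nsmul _ _ _ fun j _ => hrow j
    _ = _ := by rw [Nat.card_Ico, nsmul_eq_mul, Nat.cast_sub hm.le, hs3]; ring

/-- There exist constants `C, d > 0` (depending only on `η` and `α`) such
that for all sufficiently large `n` and all `j, k`, the resolvent `G` of the free Jacobi
operator `J̃` at `−2 + η/n^α` satisfies
`|G_{j,k}| ≤ C n^{α/2} e^{−d n^{−α/2} |j−k|}`, and consequently for `m₁ > m₂ ≥ 0` the
Hilbert–Schmidt bound `‖P_{m₁} Q_{m₂} G‖₂ ≤ √(C₀ n^{3α/2} (m₁ − m₂))` holds for some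
`C₀ > 0`.  (0-based indices below.) -/
theorem stmt11 (η : ℂ) (hη : η.im ≠ 0) (α : ℝ) (hα : 0 < α) (hα2 : α < 2) :
    ∃ C > (0 : ℝ), ∃ d > (0 : ℝ), ∃ C₀ > (0 : ℝ), ∃ N₀ : ℕ, ∀ n : ℕ, N₀ ≤ n →
      ∀ J G : l2 →L[ℂ] l2,
        (∀ (x : l2) (j : ℕ), (J x) j = (if j = 0 then 0 else x (j - 1)) + x (j + 1)) →
        G * (J - ((-2 : ℂ) + η / ((((n : ℝ) ^ α : ℝ)) : ℂ)) • 1) = 1 →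
        (J - ((-2 : ℂ) + η / ((((n : ℝ) ^ α : ℝ)) : ℂ)) • 1) * G = 1 →
        (∀ j k : ℕ,
          ‖(G (lp.single 2 k 1)) j‖
            ≤ C * (n : ℝ) ^ (α / 2) *
                Real.exp (-d * (n : ℝ) ^ (-(α / 2)) * |(j : ℝ) - (k : ℝ)|)) ∧
        (∀ m₁ m₂ : ℕ, m₂ < m₁ →
          Real.sqrt (∑ j ∈ Finset.Ico m₂ m₁, ∑' k : ℕ, ‖(G (lp.single 2 k 1)) j‖ ^ 2)
            ≤ Real.sqrt (C₀ * (n : ℝ) ^ (3 * α / 2) * ((m₁ : ℝ) - (m₂ : ℝ)))) :=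
  stmt11_general η hη α hα
end
end

section
/- Let f ∈ C_c¹(ℝ) (or more generally f in the weighted Lipschitz space L_w) and define σ_f² := (1/(8π²)) ∫∫_{ℝ²} ((f(x²)−f(y²))/(x−y))² dx dy. Then σ_f² ≤ (1/8) ‖f‖_{L_w}², where ‖f‖_{L_w} := sup_{x≠y} √(1+x²)√(1+y²) |f(x)−f(y)|/|x−y|. The same bound holds with f(x²), f(y²) replaced by f(−x²), f(−y²). -/
open MeasureTheory

namespace Stmt15Aux

lemma denom_pos (x : ℝ) : (0:ℝ) < 1 + x ^ 4 := by positivity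

lemma comp_bound (x : ℝ) (num : ℝ) (h : num * (1 + x^2) ≤ 2 * (1 + x^4)) :
    num / (1 + x ^ 4) ≤ 2 * (1 + x ^ 2)⁻¹ := by
  rw [← div_eq_mul_inv, div_le_div_iff₀ (denom_pos x) (by positivity)]
  nlinarith

lemma intA : Integrable (fun x : ℝ => x ^ 2 / (1 + x ^ 4)) := by
  refine (integrable_inv_one_add_sq.const_mul 2).mono'
    ((continuous_pow 2).div (by continuity) (fun x => (denom_pos x).ne')).aestronglyMeasurable ?_
  filter_upwards with x
  rw [Real.norm_eq_abs, abs_of_nonneg (by positivity)]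
  exact comp_bound x _ (by nlinarith [sq_nonneg (x^2-1), sq_nonneg x])

lemma intB : Integrable (fun x : ℝ => 1 / (1 + x ^ 4)) := by
  refine (integrable_inv_one_add_sq.const_mul 2).mono'
    (continuous_const.div (by continuity) (fun x => (denom_pos x).ne')).aestronglyMeasurable ?_
  filter_upwards with x
  rw [Real.norm_eq_abs, abs_of_nonneg (by positivity)]
  exact comp_bound x _ (by nlinarith [sq_nonneg (x^2-1), sq_nonneg x])

lemma intC : Integrable (fun x : ℝ => x / (1 + x ^ 4)) := by
  refine (integrable_inv_one_add_sq.const_mul 2).mono'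
    (continuous_id.div (by continuity) (fun x => (denom_pos x).ne')).aestronglyMeasurable ?_
  filter_upwards with x
  rw [Real.norm_eq_abs, abs_div, abs_of_nonneg (denom_pos x).le]
  exact comp_bound x _
    (by nlinarith [sq_nonneg (abs x * x - 1), sq_nonneg (abs x - 1), sq_nonneg x, sq_abs x,
        abs_nonneg x, sq_nonneg (x^2 - abs x)])

lemma intCzero : ∫ x : ℝ, x / (1 + x ^ 4) = 0 := by
  have h := MeasureTheory.integral_neg_eq_self (fun x : ℝ => x / (1 + x ^ 4)) volume
  have h2 : ∫ x : ℝ, (-x) / (1 + (-x) ^ 4) = ∫ x : ℝ, -(x / (1 + x ^ 4)) := by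
    congr 1; funext x; ring_nf
  rw [h2, integral_neg] at h
  linarith

lemma int_half : ∫ x : ℝ, (x ^ 2 + 1/2)⁻¹ = Real.sqrt 2 * Real.pi := by
  have hs : Real.sqrt 2 ^ 2 = 2 := Real.sq_sqrt (by norm_num)
  have key : ∀ x : ℝ, (x ^ 2 + 1/2)⁻¹ = 2 * (1 + (Real.sqrt 2 * x) ^ 2)⁻¹ := by
    intro x
    rw [mul_pow, hs, eq_comm, mul_inv_eq_iff_eq_mul₀ (by positivity)]
    field_simp
    ring
  simp_rw [key]
  rw [MeasureTheory.integral_const_mul, MeasureTheory.Measure.integral_comp_mul_left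
    (fun y : ℝ => (1 + y ^ 2)⁻¹) (Real.sqrt 2), integral_univ_inv_one_add_sq]
  rw [smul_eq_mul, abs_of_nonneg (by positivity)]
  field_simp
  nlinarith [Real.pi_pos, Real.sqrt_nonneg 2]

lemma integrable_half (a : ℝ) : Integrable (fun x : ℝ => ((x + a) ^ 2 + 1/2)⁻¹) := by
  have : Integrable (fun x : ℝ => (x ^ 2 + 1/2)⁻¹) := by
    have hs : Real.sqrt 2 ^ 2 = 2 := Real.sq_sqrt (by norm_num)
    have h := (integrable_inv_one_add_sq.comp_mul_left'
      (R := Real.sqrt 2) (by positivity)).const_mul 2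
    refine h.congr (Filter.Eventually.of_forall fun x => ?_)
    show 2 * (1 + (Real.sqrt 2 * x) ^ 2)⁻¹ = (x ^ 2 + 1/2)⁻¹
    rw [mul_pow, hs, mul_inv_eq_iff_eq_mul₀ (by positivity)]
    field_simp
    ring
  exact this.comp_add_right a

lemma int_shift (a : ℝ) : ∫ x : ℝ, ((x + a) ^ 2 + 1/2)⁻¹ = Real.sqrt 2 * Real.pi := by
  rw [MeasureTheory.integral_add_right_eq_self (fun x : ℝ => (x ^ 2 + 1/2)⁻¹) a, int_half]

lemma pf_identity (x : ℝ) :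
    (1 + x ^ 2) / (1 + x ^ 4) =
      (1/2) * ((x + -(Real.sqrt 2 / 2)) ^ 2 + 1/2)⁻¹
        + (1/2) * ((x + Real.sqrt 2 / 2) ^ 2 + 1/2)⁻¹ := by
  have hs : Real.sqrt 2 ^ 2 = 2 := Real.sq_sqrt (by norm_num)
  have h1 : ((x + -(Real.sqrt 2 / 2)) ^ 2 + 1/2) ≠ 0 := by positivity
  have h2 : ((x + Real.sqrt 2 / 2) ^ 2 + 1/2) ≠ 0 := by positivity
  have hs4 : Real.sqrt 2 ^ 4 = 4 := by
    rw [show (Real.sqrt 2)^4 = ((Real.sqrt 2)^2)^2 by ring, hs]; norm_num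
  field_simp
  ring_nf
  rw [hs, hs4]
  ring

lemma intJ : ∫ x : ℝ, (1 + x ^ 2) / (1 + x ^ 4) = Real.sqrt 2 * Real.pi := by
  have h : (fun x : ℝ => (1 + x ^ 2) / (1 + x ^ 4)) =
      fun x => (1/2) * ((x + -(Real.sqrt 2 / 2)) ^ 2 + 1/2)⁻¹
        + (1/2) * ((x + Real.sqrt 2 / 2) ^ 2 + 1/2)⁻¹ := funext pf_identity
  rw [h, integral_add ((integrable_half _).const_mul _) ((integrable_half _).const_mul _),
    MeasureTheory.integral_const_mul, MeasureTheory.integral_const_mul, int_shift, int_shift]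
  ring

lemma sumAB : (∫ x : ℝ, x ^ 2 / (1 + x ^ 4)) + (∫ x : ℝ, 1 / (1 + x ^ 4))
    = Real.sqrt 2 * Real.pi := by
  rw [← integral_add intA intB, ← intJ]
  congr 1; funext x; ring

/-- main auxiliary estimate -/
lemma key (F : ℝ → ℝ) (L : ℝ) (hL0 : 0 ≤ L) (hFc : Continuous F)
    (hF : ∀ x y : ℝ, (F x - F y)^2 * ((1 + x^4) * (1 + y^4)) ≤ L^2 * (x^2 - y^2)^2) :
    (∫ q : ℝ × ℝ, ((F q.1 - F q.2) / (q.1 - q.2)) ^ 2) ≤ Real.pi ^ 2 * L ^ 2 := by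
  set A : ℝ → ℝ := fun x => x ^ 2 / (1 + x ^ 4) with hA
  set B : ℝ → ℝ := fun x => 1 / (1 + x ^ 4) with hB
  set C : ℝ → ℝ := fun x => x / (1 + x ^ 4) with hC
  -- the dominating function, in product form
  set H : ℝ × ℝ → ℝ := fun q =>
    L^2 * (A q.1 * B q.2) + L^2 * 2 * (C q.1 * C q.2) + L^2 * (B q.1 * A q.2) with hH
  have hHint : Integrable H := by
    rw [hH, MeasureTheory.Measure.volume_eq_prod]
    exact (((intA.mul_prod intB).const_mul _).add
      ((intC.mul_prod intC).const_mul _)).add ((intB.mul_prod intA).const_mul _)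
  have hHform : ∀ q : ℝ × ℝ,
      H q = L^2 * ((q.1 + q.2)^2 * (B q.1 * B q.2)) := by
    rintro ⟨x, y⟩
    simp only [hH, hA, hB, hC]
    field_simp
    ring
  -- pointwise bound
  have hpt : ∀ q : ℝ × ℝ, ((F q.1 - F q.2) / (q.1 - q.2)) ^ 2 ≤ H q := by
    rintro ⟨x, y⟩
    rw [hHform]
    simp only [hB]
    rcases eq_or_ne x y with rfl | hxy
    · simp only [sub_self, div_zero]
      rw [zero_pow (by norm_num : (2:ℕ) ≠ 0)]
      positivity
    · have hd : (0:ℝ) < (x - y)^2 :=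
        (sq_nonneg _).lt_of_ne' (pow_ne_zero 2 (sub_ne_zero.mpr hxy))
      rw [div_pow, div_le_iff₀ hd]
      have h1 := hF x y
      have hprod : (0:ℝ) < (1 + x^4) * (1 + y^4) := by positivity
      calc (F x - F y)^2
          = ((F x - F y)^2 * ((1 + x^4) * (1 + y^4))) / ((1 + x^4) * (1 + y^4)) := by
            field_simp
        _ ≤ (L^2 * (x^2 - y^2)^2) / ((1 + x^4) * (1 + y^4)) := by gcongr
        _ = L^2 * ((x + y)^2 * (1 / (1 + x^4) * (1 / (1 + y^4)))) * (x - y)^2 := by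
            field_simp
            ring
  -- measurability of the integrand
  have hmeas : AEStronglyMeasurable
      (fun q : ℝ × ℝ => ((F q.1 - F q.2) / (q.1 - q.2)) ^ 2) volume := by
    apply Measurable.aestronglyMeasurable
    exact ((((hFc.measurable.comp measurable_fst).sub
      (hFc.measurable.comp measurable_snd)).div
      (measurable_fst.sub measurable_snd)).pow_const 2)
  have hgint : Integrable (fun q : ℝ × ℝ => ((F q.1 - F q.2) / (q.1 - q.2)) ^ 2) := by
    refine hHint.mono' hmeas ?_
    filter_upwards with q
    rw [Real.norm_eq_abs, abs_of_nonneg (sq_nonneg _)]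
    exact hpt q
  -- compute the integral of H
  have hHval : ∫ q : ℝ × ℝ, H q ≤ Real.pi ^ 2 * L ^ 2 := by
    have IA0 : 0 ≤ ∫ x : ℝ, A x := integral_nonneg fun x => by positivity
    have IB0 : 0 ≤ ∫ x : ℝ, B x := integral_nonneg fun x => by positivity
    have hsplit : ∫ q : ℝ × ℝ, H q =
        L^2 * ((∫ x : ℝ, A x) * (∫ x : ℝ, B x)) +
        L^2 * 2 * ((∫ x : ℝ, C x) * (∫ x : ℝ, C x)) +
        L^2 * ((∫ x : ℝ, B x) * (∫ x : ℝ, A x)) := by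
      simp only [hH, hA, hB, hC, MeasureTheory.Measure.volume_eq_prod]
      have i1 : Integrable (fun q : ℝ × ℝ =>
          L ^ 2 * (q.1 ^ 2 / (1 + q.1 ^ 4) * (1 / (1 + q.2 ^ 4)))) (volume.prod volume) :=
        (intA.mul_prod intB).const_mul _
      have i2 : Integrable (fun q : ℝ × ℝ =>
          L ^ 2 * 2 * (q.1 / (1 + q.1 ^ 4) * (q.2 / (1 + q.2 ^ 4)))) (volume.prod volume) :=
        (intC.mul_prod intC).const_mul _
      have i3 : Integrable (fun q : ℝ × ℝ =>
          L ^ 2 * (1 / (1 + q.1 ^ 4) * (q.2 ^ 2 / (1 + q.2 ^ 4)))) (volume.prod volume) :=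
        (intB.mul_prod intA).const_mul _
      have i12 : Integrable (fun q : ℝ × ℝ =>
          L ^ 2 * (q.1 ^ 2 / (1 + q.1 ^ 4) * (1 / (1 + q.2 ^ 4))) +
          L ^ 2 * 2 * (q.1 / (1 + q.1 ^ 4) * (q.2 / (1 + q.2 ^ 4)))) (volume.prod volume) :=
        i1.add i2
      rw [integral_add i12 i3, integral_add i1 i2,
        MeasureTheory.integral_const_mul, MeasureTheory.integral_const_mul,
        MeasureTheory.integral_const_mul,
        integral_prod_mul (fun x : ℝ => x ^ 2 / (1 + x ^ 4)) (fun y : ℝ => 1 / (1 + y ^ 4)),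
        integral_prod_mul (fun x : ℝ => x / (1 + x ^ 4)) (fun y : ℝ => y / (1 + y ^ 4)),
        integral_prod_mul (fun x : ℝ => 1 / (1 + x ^ 4)) (fun y : ℝ => y ^ 2 / (1 + y ^ 4))]
    rw [hsplit]
    have hCz : ∫ x : ℝ, C x = 0 := intCzero
    rw [hCz]
    have hsum : (∫ x : ℝ, A x) + (∫ x : ℝ, B x) = Real.sqrt 2 * Real.pi := sumAB
    have hs : Real.sqrt 2 ^ 2 = 2 := Real.sq_sqrt (by norm_num)
    have h2pi : (Real.sqrt 2 * Real.pi) ^ 2 = 2 * Real.pi ^ 2 := by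
      rw [mul_pow, hs]
    have h2ab : 2 * ((∫ x : ℝ, A x) * (∫ x : ℝ, B x)) ≤ Real.pi ^ 2 := by
      nlinarith [sq_nonneg ((∫ x : ℝ, A x) - (∫ x : ℝ, B x))]
    nlinarith [mul_le_mul_of_nonneg_left h2ab (sq_nonneg L)]
  calc (∫ q : ℝ × ℝ, ((F q.1 - F q.2) / (q.1 - q.2)) ^ 2)
      ≤ ∫ q : ℝ × ℝ, H q := integral_mono hgint hHint hpt
    _ ≤ Real.pi ^ 2 * L ^ 2 := hHval

end Stmt15Aux

/-- Let `f : ℝ → ℝ` and let `L` be a bound for the weighted Lipschitz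
norm of `f`, i.e. `√(1+x²)√(1+y²)|f(x)−f(y)| ≤ L|x−y|` for all `x, y`.  Then
`σ_f² := (1/(8π²)) ∫∫_{ℝ²} ((f(x²)−f(y²))/(x−y))² dx dy ≤ (1/8) L²`, and the same bound
holds with `f(x²), f(y²)` replaced by `f(−x²), f(−y²)`. -/
theorem stmt15 (f : ℝ → ℝ) (L : ℝ)
    (hL : ∀ x y : ℝ,
      Real.sqrt (1 + x ^ 2) * Real.sqrt (1 + y ^ 2) * |f x - f y| ≤ L * |x - y|) :
    (1 / (8 * Real.pi ^ 2)) *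
        (∫ q : ℝ × ℝ, ((f (q.1 ^ 2) - f (q.2 ^ 2)) / (q.1 - q.2)) ^ 2)
      ≤ (1 / 8) * L ^ 2 ∧
    (1 / (8 * Real.pi ^ 2)) *
        (∫ q : ℝ × ℝ, ((f (-q.1 ^ 2) - f (-q.2 ^ 2)) / (q.1 - q.2)) ^ 2)
      ≤ (1 / 8) * L ^ 2 := by
  have hL0 : 0 ≤ L := by
    have h01 := hL 0 1
    have hnn : (0:ℝ) ≤ Real.sqrt (1 + 0 ^ 2) * Real.sqrt (1 + 1 ^ 2) * |f 0 - f 1| := by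
      positivity
    have : (0:ℝ) ≤ L * |(0:ℝ) - 1| := le_trans hnn h01
    simpa using this
  -- f is Lipschitz hence continuous
  have hflip : LipschitzWith (Real.toNNReal L) f := by
    apply LipschitzWith.of_dist_le_mul
    intro x y
    rw [Real.dist_eq, Real.dist_eq]
    have h := hL x y
    have hw1 : (1:ℝ) ≤ Real.sqrt (1 + x ^ 2) := by
      have := Real.sqrt_le_sqrt (show (1:ℝ) ≤ 1 + x ^ 2 by nlinarith [sq_nonneg x])
      simpa using this
    have hw2 : (1:ℝ) ≤ Real.sqrt (1 + y ^ 2) := by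
      have := Real.sqrt_le_sqrt (show (1:ℝ) ≤ 1 + y ^ 2 by nlinarith [sq_nonneg y])
      simpa using this
    have habs : |f x - f y| ≤ L * |x - y| := by
      nlinarith [abs_nonneg (f x - f y), abs_nonneg (x - y),
        mul_le_mul hw1 hw2 (by norm_num) (le_trans zero_le_one hw1)]
    calc |f x - f y| ≤ L * |x - y| := habs
      _ = (Real.toNNReal L : ℝ) * |x - y| := by rw [Real.coe_toNNReal L hL0]
  have hfc : Continuous f := hflip.continuous
  -- the squared weighted Lipschitz estimate, for both signs
  have hsq : ∀ s : ℝ, s = 1 ∨ s = -1 → ∀ x y : ℝ,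
      (f (s * x^2) - f (s * y^2))^2 * ((1 + x^4) * (1 + y^4)) ≤ L^2 * (x^2 - y^2)^2 := by
    intro s hs x y
    have h := hL (s * x^2) (s * y^2)
    have hx4 : (s * x^2)^2 = x^4 := by rcases hs with rfl | rfl <;> ring
    have hy4 : (s * y^2)^2 = y^4 := by rcases hs with rfl | rfl <;> ring
    have e1 : Real.sqrt (1 + (s * x^2) ^ 2) ^ 2 = 1 + x^4 := by
      rw [Real.sq_sqrt (by positivity), hx4]
    have e2 : Real.sqrt (1 + (s * y^2) ^ 2) ^ 2 = 1 + y^4 := by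
      rw [Real.sq_sqrt (by positivity), hy4]
    have habs : |s * x^2 - s * y^2| ^ 2 = (x^2 - y^2)^2 := by
      rw [sq_abs]
      rcases hs with rfl | rfl <;> ring
    have h2 : (Real.sqrt (1 + (s * x^2) ^ 2) * Real.sqrt (1 + (s * y^2) ^ 2) *
        |f (s * x^2) - f (s * y^2)|) ^ 2 ≤ (L * |s * x^2 - s * y^2|) ^ 2 := by
      apply pow_le_pow_left₀ (by positivity) h
    calc (f (s * x^2) - f (s * y^2))^2 * ((1 + x^4) * (1 + y^4))
        = (Real.sqrt (1 + (s * x^2) ^ 2) * Real.sqrt (1 + (s * y^2) ^ 2) *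
            |f (s * x^2) - f (s * y^2)|) ^ 2 := by
          rw [mul_pow, mul_pow, e1, e2, sq_abs]; ring
      _ ≤ (L * |s * x^2 - s * y^2|) ^ 2 := h2
      _ = L^2 * (x^2 - y^2)^2 := by rw [mul_pow, habs]
  have hπ : (0:ℝ) < 8 * Real.pi ^ 2 := by positivity
  constructor
  · have hk := Stmt15Aux.key (fun x => f (x^2)) L hL0 (hfc.comp (by continuity)) ?_
    · calc (1 / (8 * Real.pi ^ 2)) *
            (∫ q : ℝ × ℝ, ((f (q.1 ^ 2) - f (q.2 ^ 2)) / (q.1 - q.2)) ^ 2)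
          ≤ (1 / (8 * Real.pi ^ 2)) * (Real.pi ^ 2 * L ^ 2) :=
            mul_le_mul_of_nonneg_left hk (by positivity)
        _ = (1 / 8) * L ^ 2 := by field_simp
    · intro x y
      have := hsq 1 (Or.inl rfl) x y
      simpa using this
  · have hk := Stmt15Aux.key (fun x => f (-x^2)) L hL0 (hfc.comp (by continuity)) ?_
    · calc (1 / (8 * Real.pi ^ 2)) *
            (∫ q : ℝ × ℝ, ((f (-q.1 ^ 2) - f (-q.2 ^ 2)) / (q.1 - q.2)) ^ 2)
          ≤ (1 / (8 * Real.pi ^ 2)) * (Real.pi ^ 2 * L ^ 2) :=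
            mul_le_mul_of_nonneg_left hk (by positivity)
        _ = (1 / 8) * L ^ 2 := by field_simp
    · intro x y
      have := hsq (-1) (Or.inr rfl) x y
      simpa [neg_mul, one_mul] using this
end

section
/- Let g(x) = 1/(x−i) and write Re g(x) = x/(x²+1), Im g(x) = 1/(x²+1) (up to sign conventions: Im(1/(x−i)) = 1/(x²+1)). Then (1/(8π²)) ∫∫_{ℝ²} ((Im g(−x²) − Im g(−y²))/(x−y))² dx dy = 3/32 and (1/(8π²)) ∫∫_{ℝ²} ((Re g(−x²) − Re g(−y²))/(x−y))² dx dy = 1/32; the same values hold with arguments x², y² in place of −x², −y². -/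
open MeasureTheory

/-- `Im g` for `g(x) = 1/(x−i)`, i.e. `x ↦ 1/(x²+1)`. -/
noncomputable def imG (u : ℝ) : ℝ := 1 / (u ^ 2 + 1)

/-- `Re g` for `g(x) = 1/(x−i)`, i.e. `x ↦ x/(x²+1)`. -/
noncomputable def reG (u : ℝ) : ℝ := u / (u ^ 2 + 1)

open Real Filter Topology Polynomial

/-! `imG` is even and `reG` is odd, so replacing `x²` by `-x²` changes neither integrand. For `x²`
the divided differences are sums of separable terms,
`(imG x² - imG y²) / (x - y) = -(x³ + x²y + xy² + y³) / ((x⁴ + 1)(y⁴ + 1))` and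
`(reG x² - reG y²) / (x - y) = (x + y - x³y² - x²y³) / ((x⁴ + 1)(y⁴ + 1))`,
so by Fubini the double integral of the square is a quadratic form in the moments
`∫ xᵏ / (x⁴ + 1)²`. The odd moments vanish, and integrating the derivative of `xᵏ⁺¹ / (x⁴ + 1)`
expresses the even ones through `∫ 1 / (x⁴ + 1)` and `∫ x² / (x⁴ + 1)`. These two are equal
(swap them by `x ↦ 1/x`) and sum to `√2 π` (an arctangent antiderivative), so each is `π / √2`.
-/

theorem ae_prod_fst_ne_snd {α : Type*} [MeasurableSpace α] [MeasurableEq α]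
    (μ ν : Measure α) [SFinite ν] [NullSingletonClass ν] : ∀ᵐ p ∂μ.prod ν, p.1 ≠ p.2 := by
  simp only [ae_iff, ne_eq, not_not]
  rw [Measure.measure_prod_null (measurableSet_eq_fun measurable_fst measurable_snd)]
  refine Eventually.of_forall fun x => ?_
  have : Prod.mk x ⁻¹' {p : α × α | p.1 = p.2} = {x} := by ext y; simp [eq_comm]
  simp [this]

theorem integral_prod_sq_sum_mul {α β ι : Type*} [MeasurableSpace α] [MeasurableSpace β]
    {μ : Measure α} {ν : Measure β} [SFinite μ] [SFinite ν] [Fintype ι]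
    (f : ι → α → ℝ) (g : ι → β → ℝ) (hf : ∀ i, MemLp (f i) 2 μ) (hg : ∀ i, MemLp (g i) 2 ν) :
    ∫ p, (∑ i, f i p.1 * g i p.2) ^ 2 ∂μ.prod ν =
      ∑ i, ∑ j, (∫ x, f i x * f j x ∂μ) * ∫ y, g i y * g j y ∂ν := by
  have hint : ∀ i j, Integrable (fun p : α × β => (f i p.1 * f j p.1) * (g i p.2 * g j p.2))
      (μ.prod ν) := fun i j =>
    ((hf i).integrable_mul (hf j)).mul_prod ((hg i).integrable_mul (hg j))
  calc ∫ p, (∑ i, f i p.1 * g i p.2) ^ 2 ∂μ.prod ν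
      = ∫ p, ∑ i, ∑ j, (f i p.1 * f j p.1) * (g i p.2 * g j p.2) ∂μ.prod ν := by
        congr with p
        rw [sq, Finset.sum_mul_sum]
        exact Finset.sum_congr rfl fun i _ => Finset.sum_congr rfl fun j _ => by ring
    _ = ∑ i, ∑ j, ∫ p, (f i p.1 * f j p.1) * (g i p.2 * g j p.2) ∂μ.prod ν := by
        rw [integral_finsetSum _ fun i _ => integrable_finsetSum _ fun j _ => hint i j]
        exact Finset.sum_congr rfl fun i _ => integral_finsetSum _ fun j _ => hint i j
    _ = _ := Finset.sum_congr rfl fun i _ => Finset.sum_congr rfl fun j _ =>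
        integral_prod_mul (fun x => f i x * f j x) (fun y => g i y * g j y)

theorem integral_eq_zero_of_odd {G E : Type*} [MeasurableSpace G] [AddGroup G] [MeasurableNeg G]
    [NormedAddCommGroup E] [NormedSpace ℝ E] {f : G → E} (hf : f.Odd) (μ : Measure G)
    [μ.IsNegInvariant] : ∫ x, f x ∂μ = 0 := by
  have h := integral_neg_eq_self f μ
  simp only [hf _, integral_neg, neg_eq_iff_add_eq_zero, ← two_smul ℝ] at h
  exact (smul_eq_zero.mp h).resolve_left two_ne_zero

theorem integrable_of_abs_mul_one_add_sq_le {f : ℝ → ℝ} (hf : Continuous f) {C : ℝ}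
    (hC : ∀ x, |f x| * (1 + x ^ 2) ≤ C) : Integrable f := by
  refine (integrable_inv_one_add_sq.const_mul C).mono' hf.aestronglyMeasurable
    (ae_of_all _ fun x => ?_)
  rw [Real.norm_eq_abs, ← div_eq_mul_inv, le_div_iff₀ (by positivity)]
  exact hC x

theorem integrable_pow_div_quartic_pow {k n : ℕ} (hkn : k + 2 ≤ 4 * n) :
    Integrable fun x : ℝ => x ^ k / (x ^ 4 + 1) ^ n := by
  refine integrable_of_abs_mul_one_add_sq_le (by fun_prop (disch := intro x; positivity))
    (C := 2 ^ (n + 1)) fun x => ?_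
  have hpos : 0 < (x ^ 4 + 1) ^ n := by positivity
  set m := max 1 |x|
  have hm : m ^ 2 ≤ 1 + x ^ 2 ∧ 1 + x ^ 2 ≤ 2 * m ^ 2 := by
    rcases max_cases 1 |x| with ⟨hmax, hcmp⟩ | ⟨hmax, hcmp⟩ <;> simp only [m, hmax] <;>
      constructor <;> nlinarith [sq_abs x, abs_nonneg x]
  have hsq : (1 + x ^ 2) ^ 2 ≤ 2 * (x ^ 4 + 1) := by nlinarith [sq_nonneg (x ^ 2 - 1)]
  rw [abs_div, abs_pow, abs_of_pos hpos, div_mul_eq_mul_div, div_le_iff₀ hpos]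
  calc |x| ^ k * (1 + x ^ 2) ≤ m ^ k * (2 * m ^ 2) := by
        gcongr
        · exact le_max_right _ _
        · exact hm.2
    _ = 2 * m ^ (k + 2) := by ring
    _ ≤ 2 * m ^ (4 * n) := by gcongr; exact le_max_left _ _
    _ = 2 * ((m ^ 2) ^ 2) ^ n := by rw [← pow_mul, ← pow_mul]; ring_nf
    _ ≤ 2 * ((1 + x ^ 2) ^ 2) ^ n := by gcongr; exact hm.1
    _ ≤ 2 * (2 * (x ^ 4 + 1)) ^ n := by gcongr
    _ = 2 ^ (n + 1) * (x ^ 4 + 1) ^ n := by rw [mul_pow]; ring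

theorem sq_add_mul_add_one_pos {s : ℝ} (hs : s ^ 2 < 4) (x : ℝ) : 0 < x ^ 2 + s * x + 1 := by
  nlinarith [sq_nonneg (2 * x + s)]

noncomputable def quarticFrac (k : ℕ) (x : ℝ) : ℝ := x ^ k / (x ^ 4 + 1)

noncomputable def quarticMoment (k : ℕ) : ℝ := ∫ x, x ^ k / (x ^ 4 + 1) ^ 2

theorem continuous_quarticFrac (k : ℕ) : Continuous (quarticFrac k) := by
  unfold quarticFrac; fun_prop (disch := intro x; positivity)

theorem integrable_quarticFrac {k : ℕ} (hk : k ≤ 2) : Integrable (quarticFrac k) := by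
  unfold quarticFrac
  simpa using integrable_pow_div_quartic_pow (k := k) (n := 1) (by omega)

theorem memLp_quarticFrac {k : ℕ} (hk : k ≤ 3) : MemLp (quarticFrac k) 2 := by
  rw [memLp_two_iff_integrable_sq (continuous_quarticFrac k).aestronglyMeasurable]
  simpa [quarticFrac, div_pow, ← pow_mul, mul_comm k] using
    integrable_pow_div_quartic_pow (k := 2 * k) (n := 2) (by omega)

theorem integral_quarticFrac_mul (a b : ℕ) :
    ∫ x, quarticFrac a x * quarticFrac b x = quarticMoment (a + b) := by
  simp only [quarticFrac, quarticMoment, div_mul_div_comm, pow_add, sq]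

theorem quarticMoment_of_odd {k : ℕ} (hk : Odd k) : quarticMoment k = 0 :=
  integral_eq_zero_of_odd (fun x => by simp [hk.neg_pow, (by decide : Even 4).neg_pow, neg_div]) _

theorem degree_X_pow_lt_degree_X_pow_four_add_one {k : ℕ} (hk : k < 4) :
    (X ^ k : ℝ[X]).degree < (X ^ 4 + 1 : ℝ[X]).degree := by
  rw [degree_X_pow, show (X ^ 4 + 1 : ℝ[X]).degree = 4 by compute_degree!]
  exact_mod_cast hk

theorem tendsto_quarticFrac_atTop {k : ℕ} (hk : k < 4) :
    Tendsto (quarticFrac k) atTop (𝓝 0) := by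
  unfold quarticFrac
  simpa using
    div_tendsto_atTop_zero_of_degree_lt _ _ (degree_X_pow_lt_degree_X_pow_four_add_one hk)

theorem tendsto_quarticFrac_atBot {k : ℕ} (hk : k < 4) :
    Tendsto (quarticFrac k) atBot (𝓝 0) := by
  unfold quarticFrac
  simpa using
    div_tendsto_atBot_zero_of_degree_lt _ _ (degree_X_pow_lt_degree_X_pow_four_add_one hk)

theorem hasDerivAt_quarticFrac_succ (k : ℕ) (x : ℝ) :
    HasDerivAt (quarticFrac (k + 1))
      ((k + 1) * quarticFrac k x - 4 * (x ^ (k + 4) / (x ^ 4 + 1) ^ 2)) x := by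
  have hx : x ^ 4 + 1 ≠ 0 := by positivity
  refine ((hasDerivAt_pow (k + 1) x).div ((hasDerivAt_pow 4 x).add_const 1) hx).congr_deriv ?_
  simp only [quarticFrac, Nat.add_sub_cancel]
  field_simp
  push_cast
  ring

theorem quarticMoment_add_four {k : ℕ} (hk : k ≤ 2) :
    quarticMoment (k + 4) = (k + 1) / 4 * ∫ x, quarticFrac k x := by
  have hmom : Integrable fun x : ℝ => x ^ (k + 4) / (x ^ 4 + 1) ^ 2 :=
    integrable_pow_div_quartic_pow (by omega)
  have h := integral_of_hasDerivAt_of_tendsto (hasDerivAt_quarticFrac_succ k)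
    (((integrable_quarticFrac hk).const_mul _).sub (hmom.const_mul 4))
    (tendsto_quarticFrac_atBot (by omega)) (tendsto_quarticFrac_atTop (by omega))
  rw [integral_sub ((integrable_quarticFrac hk).const_mul _) (hmom.const_mul 4),
    integral_const_mul, integral_const_mul] at h
  rw [quarticMoment]
  linarith

theorem quarticMoment_add_quarticMoment_add_four {k : ℕ} (hk : k ≤ 2) :
    quarticMoment k + quarticMoment (k + 4) = ∫ x, quarticFrac k x := by
  rw [quarticMoment, quarticMoment, ← integral_add (integrable_pow_div_quartic_pow (by omega))
    (integrable_pow_div_quartic_pow (by omega))]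
  congr with x
  have hx : x ^ 4 + 1 ≠ 0 := by positivity
  simp only [quarticFrac]
  field_simp
  ring

theorem integral_quarticFrac_of_even {k : ℕ} (hk : Even k) :
    ∫ x, quarticFrac k x = 2 * ∫ x in Set.Ioi 0, quarticFrac k x := by
  rw [← integral_comp_abs]
  congr with x
  simp only [quarticFrac, hk.pow_abs, (by decide : Even 4).pow_abs]

theorem integral_quarticFrac_zero_eq_two : ∫ x, quarticFrac 0 x = ∫ x, quarticFrac 2 x := by
  rw [integral_quarticFrac_of_even (by decide), integral_quarticFrac_of_even (by decide),
    ← integral_comp_rpow_Ioi (quarticFrac 0) (p := -1) (by norm_num)]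
  congr 1
  refine setIntegral_congr_fun measurableSet_Ioi fun x (hx : 0 < x) => ?_
  norm_num [quarticFrac, rpow_neg_one, rpow_neg hx.le]
  field_simp
  ring

-- The antiderivative comes from `x⁴ + 1 = (x² + s x + 1)(x² - s x + 1)` with `s = √2`.
theorem hasDerivAt_arctan_add_arctan {s : ℝ} (hs : s ^ 2 = 2) (x : ℝ) :
    HasDerivAt (fun x => s / 2 * (arctan (s * x + 1) + arctan (s * x - 1)))
      (quarticFrac 2 x + quarticFrac 0 x) x := by
  have hA := (sq_add_mul_add_one_pos (s := s) (by linarith) x).ne'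
  have hB := (sq_add_mul_add_one_pos (s := -s) (by linarith) x).ne'
  rw [neg_mul, ← sub_eq_add_neg] at hB
  have hlin (c : ℝ) : HasDerivAt (fun x => s * x + c) s x := by
    simpa using ((hasDerivAt_id x).const_mul s).add_const c
  refine ((((hasDerivAt_arctan _).comp x (hlin 1)).add
    ((hasDerivAt_arctan _).comp x (hlin (-1)))).const_mul (s / 2)).congr_deriv ?_
  have h1 : 1 + (s * x + 1) ^ 2 = 2 * (x ^ 2 + s * x + 1) := by linear_combination x ^ 2 * hs
  have h2 : 1 + (s * x + -1) ^ 2 = 2 * (x ^ 2 - s * x + 1) := by linear_combination x ^ 2 * hs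
  have h3 : x ^ 2 + 1 = ((x ^ 2 + s * x + 1) + (x ^ 2 - s * x + 1)) / 2 := by ring
  have h4 : x ^ 4 + 1 = (x ^ 2 + s * x + 1) * (x ^ 2 - s * x + 1) := by
    linear_combination x ^ 2 * hs
  simp only [quarticFrac, pow_zero, ← add_div]
  rw [h1, h2, h3, h4]
  generalize x ^ 2 + s * x + 1 = A at *
  generalize x ^ 2 - s * x + 1 = B at *
  field_simp
  linear_combination (A + B) * hs

theorem integral_quarticFrac_two_add_zero :
    (∫ x, quarticFrac 2 x) + ∫ x, quarticFrac 0 x = √2 * π := by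
  have hs : √2 ^ 2 = 2 := sq_sqrt zero_le_two
  have hs0 : 0 < √2 := by positivity
  have hlin (c : ℝ) : Tendsto (fun x => √2 * x + c) atTop atTop :=
    tendsto_atTop_add_const_right _ c (tendsto_id.const_mul_atTop hs0)
  have hlin' (c : ℝ) : Tendsto (fun x => √2 * x + c) atBot atBot :=
    tendsto_atBot_add_const_right _ c (tendsto_id.const_mul_atBot hs0)
  have htop := tendsto_nhds_of_tendsto_nhdsWithin tendsto_arctan_atTop
  have hbot := tendsto_nhds_of_tendsto_nhdsWithin tendsto_arctan_atBot
  rw [← integral_add (integrable_quarticFrac le_rfl) (integrable_quarticFrac zero_le_two),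
    integral_of_hasDerivAt_of_tendsto (hasDerivAt_arctan_add_arctan hs)
      ((integrable_quarticFrac le_rfl).add (integrable_quarticFrac zero_le_two))
      (((hbot.comp (hlin' 1)).add (hbot.comp (hlin' (-1)))).const_mul _)
      (((htop.comp (hlin 1)).add (htop.comp (hlin (-1)))).const_mul _)]
  ring

theorem integral_quarticFrac_zero : ∫ x, quarticFrac 0 x = √2 * π / 2 := by
  linarith [integral_quarticFrac_two_add_zero, integral_quarticFrac_zero_eq_two]

theorem integral_quarticFrac_two : ∫ x, quarticFrac 2 x = √2 * π / 2 := by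
  linarith [integral_quarticFrac_two_add_zero, integral_quarticFrac_zero_eq_two]

theorem quarticMoment_four : quarticMoment 4 = √2 * π / 8 := by
  have h := quarticMoment_add_four zero_le_two
  norm_num [integral_quarticFrac_zero] at h
  linarith

theorem quarticMoment_zero : quarticMoment 0 = 3 * (√2 * π) / 8 := by
  have h := quarticMoment_add_quarticMoment_add_four zero_le_two
  norm_num [integral_quarticFrac_zero, quarticMoment_four] at h
  linarith

theorem quarticMoment_six : quarticMoment 6 = 3 * (√2 * π) / 8 := by
  have h := quarticMoment_add_four le_rfl
  norm_num [integral_quarticFrac_two] at h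
  linarith

theorem quarticMoment_two : quarticMoment 2 = √2 * π / 8 := by
  have h := quarticMoment_add_quarticMoment_add_four le_rfl
  norm_num [integral_quarticFrac_two, quarticMoment_six] at h
  linarith

-- The edge-variance functional `σ_f²` of the paper. On the null diagonal `x = y` the integrand
-- is `0` (division by zero).
noncomputable def edgeVariance (f : ℝ → ℝ) : ℝ :=
  1 / (8 * π ^ 2) * ∫ q : ℝ × ℝ, ((f q.1 - f q.2) / (q.1 - q.2)) ^ 2

theorem edgeVariance_neg (f : ℝ → ℝ) : edgeVariance (-f) = edgeVariance f := by
  simp only [edgeVariance, Pi.neg_apply]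
  congr 2 with q
  ring

theorem integral_sq_sub_div_sub_eq_sum {ι : Type*} [Fintype ι] (μ : Measure ℝ) [SFinite μ]
    [NullSingletonClass μ] {f : ℝ → ℝ} {u v : ι → ℝ → ℝ}
    (h : ∀ x y, x ≠ y → (f x - f y) / (x - y) = ∑ i, u i x * v i y)
    (hu : ∀ i, MemLp (u i) 2 μ) (hv : ∀ i, MemLp (v i) 2 μ) :
    ∫ q, ((f q.1 - f q.2) / (q.1 - q.2)) ^ 2 ∂μ.prod μ =
      ∑ i, ∑ j, (∫ x, u i x * u j x ∂μ) * ∫ y, v i y * v j y ∂μ := by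
  rw [← integral_prod_sq_sum_mul u v hu hv]
  refine integral_congr_ae ?_
  filter_upwards [ae_prod_fst_ne_snd μ μ] with q hq
  rw [h _ _ hq]

theorem imG_sq_sub_div_sub {x y : ℝ} (hxy : x ≠ y) :
    (imG (x ^ 2) - imG (y ^ 2)) / (x - y) =
      ∑ i : Fin 4, -quarticFrac i x * quarticFrac (3 - i) y := by
  have hx : x ^ 4 + 1 ≠ 0 := by positivity
  have hy : y ^ 4 + 1 ≠ 0 := by positivity
  have hxy' : x - y ≠ 0 := sub_ne_zero.mpr hxy
  norm_num [Fin.sum_univ_four, imG, quarticFrac]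
  field_simp
  ring

theorem edgeVariance_imG_sq : edgeVariance (fun x => imG (x ^ 2)) = 3 / 32 := by
  have hs : √2 ^ 2 = 2 := sq_sqrt zero_le_two
  rw [edgeVariance, Measure.volume_eq_prod, integral_sq_sub_div_sub_eq_sum volume
    (fun x y hxy => imG_sq_sub_div_sub hxy) (fun i => (memLp_quarticFrac (by omega)).neg)
    (fun i => memLp_quarticFrac (by omega))]
  simp only [Fin.sum_univ_four, neg_mul_neg, integral_quarticFrac_mul]
  norm_num [quarticMoment_zero, quarticMoment_two, quarticMoment_four, quarticMoment_six,
    quarticMoment_of_odd]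
  ring_nf
  rw [hs]
  field_simp
  ring

theorem reG_sq_sub_div_sub {x y : ℝ} (hxy : x ≠ y) :
    (reG (x ^ 2) - reG (y ^ 2)) / (x - y) =
      ∑ i : Fin 4, ![quarticFrac 1, quarticFrac 0, -quarticFrac 3, -quarticFrac 2] i x *
        quarticFrac i y := by
  have hx : x ^ 4 + 1 ≠ 0 := by positivity
  have hy : y ^ 4 + 1 ≠ 0 := by positivity
  have hxy' : x - y ≠ 0 := sub_ne_zero.mpr hxy
  simp [Fin.sum_univ_four, reG, quarticFrac]
  field_simp
  ring

theorem edgeVariance_reG_sq : edgeVariance (fun x => reG (x ^ 2)) = 1 / 32 := by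
  have hs : √2 ^ 2 = 2 := sq_sqrt zero_le_two
  rw [edgeVariance, Measure.volume_eq_prod, integral_sq_sub_div_sub_eq_sum volume
    (fun x y hxy => reG_sq_sub_div_sub hxy)
    (fun i => by fin_cases i <;> simp [memLp_quarticFrac, MemLp.neg])
    (fun i => memLp_quarticFrac (by omega))]
  simp [Fin.sum_univ_four, integral_neg, integral_quarticFrac_mul]
  norm_num [quarticMoment_zero, quarticMoment_two, quarticMoment_four, quarticMoment_six,
    quarticMoment_of_odd]
  ring_nf
  rw [hs]
  field_simp
  ring

theorem imG_neg (u : ℝ) : imG (-u) = imG u := by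
  simp [imG]

theorem reG_neg (u : ℝ) : reG (-u) = -reG u := by
  simp [reG, neg_div]

/-- Let `g(x) = 1/(x−i)`, so `Im g(x) = 1/(x²+1)` and
`Re g(x) = x/(x²+1)`.  Then
`(1/(8π²)) ∫∫ ((Im g(−x²) − Im g(−y²))/(x−y))² dx dy = 3/32` and
`(1/(8π²)) ∫∫ ((Re g(−x²) − Re g(−y²))/(x−y))² dx dy = 1/32`;
the same values hold with `x², y²` in place of `−x², −y²`. -/
theorem stmt18 :
    (1 / (8 * Real.pi ^ 2)) *
        (∫ q : ℝ × ℝ, ((imG (-q.1 ^ 2) - imG (-q.2 ^ 2)) / (q.1 - q.2)) ^ 2) = 3 / 32 ∧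
    (1 / (8 * Real.pi ^ 2)) *
        (∫ q : ℝ × ℝ, ((reG (-q.1 ^ 2) - reG (-q.2 ^ 2)) / (q.1 - q.2)) ^ 2) = 1 / 32 ∧
    (1 / (8 * Real.pi ^ 2)) *
        (∫ q : ℝ × ℝ, ((imG (q.1 ^ 2) - imG (q.2 ^ 2)) / (q.1 - q.2)) ^ 2) = 3 / 32 ∧
    (1 / (8 * Real.pi ^ 2)) *
        (∫ q : ℝ × ℝ, ((reG (q.1 ^ 2) - reG (q.2 ^ 2)) / (q.1 - q.2)) ^ 2) = 1 / 32 := by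
  have him : (fun x : ℝ => imG (-x ^ 2)) = fun x => imG (x ^ 2) := funext fun x => imG_neg _
  have hre : (fun x : ℝ => reG (-x ^ 2)) = -fun x => reG (x ^ 2) := funext fun x => reG_neg _
  refine ⟨?_, ?_, edgeVariance_imG_sq, edgeVariance_reG_sq⟩
  · change edgeVariance (fun x => imG (-x ^ 2)) = 3 / 32
    rw [him, edgeVariance_imG_sq]
  · change edgeVariance (fun x => reG (-x ^ 2)) = 1 / 32
    rw [hre, edgeVariance_neg, edgeVariance_reG_sq]
end
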